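/- arXiv:2109.03447 — 7 statements merged into one kernel-verified Lean document; each statement's English description precedes it below -/
import Mathlib

section
/- For a two-player symmetric game with finite action set A = {1,...,M} and payoffs s_1, s_2 (with s_2(i,j) = s_1(j,i)), the game is an exact potential game if and only if there exists a function c : A → ℝ such that (s_1(i,j) - s_1(j,i))/2 = c(j) - c(i) for all i,j ∈ A. -/
/-!
An exact potential `Φ` differs from `s₁` by a function of the column alone and from `s₂` by a
function of the row alone. For a symmetric game, comparing the two at `(i, j)` and on the diagonal
shows that the antisymmetric part of `s₁` is `c j - c i` with `2 c k = s₁ (k, k) - Φ (k, k)`.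
Conversely, given `c`, the symmetric part of `s₁` minus `c i + c j` is an exact potential.
-/

variable {A : Type*}

def IsExactPotential (s₁ s₂ Φ : A × A → ℝ) : Prop :=
  (∀ i i' j, s₁ (i, j) - s₁ (i', j) = Φ (i, j) - Φ (i', j)) ∧
    (∀ i j j', s₂ (i, j) - s₂ (i, j') = Φ (i, j) - Φ (i, j'))

theorem IsExactPotential.antisymm_eq_sub {s₁ s₂ Φ : A × A → ℝ} (hΦ : IsExactPotential s₁ s₂ Φ)
    (hsym : ∀ i j, s₂ (i, j) = s₁ (j, i)) (i j : A) :
    (s₁ (i, j) - s₁ (j, i)) / 2 =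
      (s₁ (j, j) - Φ (j, j)) / 2 - (s₁ (i, i) - Φ (i, i)) / 2 := by
  have hcol := hΦ.1 i j j
  have hrow := hΦ.2 i j i
  rw [hsym, hsym] at hrow
  linarith

theorem isExactPotential_of_antisymm_eq_sub {s₁ s₂ : A × A → ℝ}
    (hsym : ∀ i j, s₂ (i, j) = s₁ (j, i)) {c : A → ℝ}
    (hc : ∀ i j, (s₁ (i, j) - s₁ (j, i)) / 2 = c j - c i) :
    IsExactPotential s₁ s₂ fun p => (s₁ (p.1, p.2) + s₁ (p.2, p.1)) / 2 - c p.1 - c p.2 := by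
  refine ⟨fun i i' j => ?_, fun i j j' => ?_⟩
  · linarith [hc i j, hc i' j]
  · rw [hsym, hsym]
    linarith [hc j i, hc j' i]

theorem exists_isExactPotential_iff {s₁ s₂ : A × A → ℝ} (hsym : ∀ i j, s₂ (i, j) = s₁ (j, i)) :
    (∃ Φ, IsExactPotential s₁ s₂ Φ) ↔ ∃ c : A → ℝ, ∀ i j, (s₁ (i, j) - s₁ (j, i)) / 2 = c j - c i :=
  ⟨fun ⟨Φ, hΦ⟩ => ⟨fun k => (s₁ (k, k) - Φ (k, k)) / 2, hΦ.antisymm_eq_sub hsym⟩,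
    fun ⟨_, hc⟩ => ⟨_, isExactPotential_of_antisymm_eq_sub hsym hc⟩⟩

/-- A two-player symmetric game is an exact potential game iff the antisymmetric part
of player 1's payoff is a difference `c j - c i`. -/
theorem stmt1 {M : ℕ} (s1 s2 : Fin M × Fin M → ℝ)
    (hsym : ∀ i j, s2 (i, j) = s1 (j, i)) :
    (∃ Φ : Fin M × Fin M → ℝ,
      (∀ i i' j, s1 (i, j) - s1 (i', j) = Φ (i, j) - Φ (i', j)) ∧
      (∀ i j j', s2 (i, j) - s2 (i, j') = Φ (i, j) - Φ (i, j'))) ↔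
    (∃ c : Fin M → ℝ, ∀ i j, (s1 (i, j) - s1 (j, i)) / 2 = c j - c i) :=
  exists_isExactPotential_iff hsym
end

section
/- Let P* be a probability distribution on A × A (A finite) satisfying Akin's stationarity condition for TFT of player 1: Σ_{(i,j)} P*(i,j) (δ_{σ,j} - δ_{σ,i}) = 0 for all σ ∈ A. If the stage game is a symmetric potential game (so (s_1(i,j)-s_1(j,i))/2 = c(j)-c(i) for some c), then the expected payoffs under P* are equal: Σ_{(i,j)} s_1(i,j) P*(i,j) = Σ_{(i,j)} s_2(i,j) P*(i,j). -/
/-!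
Akin's condition for Tit-for-Tat says exactly that the two marginals of `P*` agree, so
`∑ P*(i,j) (f j - f i) = 0` for every `f : A → ℝ`. For a symmetric potential game the payoff
difference `s₁(i,j) - s₂(i,j)` is `2 (c j - c i)`, whose expectation therefore vanishes.
-/

open Finset

section

variable {α R : Type*} [Fintype α] [DecidableEq α] [CommRing R]

theorem sum_mul_indicator_sub_indicator (f : α → R) (x y : α) :
    ∑ a, f a * ((if a = y then (1 : R) else 0) - (if a = x then 1 else 0)) = f y - f x := by
  simp [mul_sub, sum_sub_distrib]

theorem sum_mul_sub_eq_zero_of_tft_stationary (P : α × α → R)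
    (hP : ∀ a : α, ∑ σ : α × α,
      P σ * ((if a = σ.2 then (1 : R) else 0) - (if a = σ.1 then 1 else 0)) = 0)
    (f : α → R) :
    ∑ σ : α × α, P σ * (f σ.2 - f σ.1) = 0 :=
  calc ∑ σ : α × α, P σ * (f σ.2 - f σ.1)
      = ∑ σ : α × α, ∑ a, f a *
          (P σ * ((if a = σ.2 then (1 : R) else 0) - (if a = σ.1 then 1 else 0))) := by
        simp_rw [mul_left_comm _ (P _), ← mul_sum, sum_mul_indicator_sub_indicator]
    _ = ∑ a, f a * ∑ σ : α × α,
          P σ * ((if a = σ.2 then (1 : R) else 0) - (if a = σ.1 then 1 else 0)) := by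
        rw [sum_comm]
        simp_rw [mul_sum]
    _ = 0 := by simp [hP]

end

theorem stmt6_general {M : ℕ} (s1 s2 : Fin M × Fin M → ℝ)
    (hsym : ∀ i j, s2 (i, j) = s1 (j, i))
    (c : Fin M → ℝ)
    (hc : ∀ i j, (s1 (i, j) - s1 (j, i)) / 2 = c j - c i)
    (Pstar : Fin M × Fin M → ℝ)
    (hAkin : ∀ σa : Fin M, ∑ σ : Fin M × Fin M,
      Pstar σ * ((if σa = σ.2 then (1 : ℝ) else 0) - (if σa = σ.1 then 1 else 0)) = 0) :
    ∑ σ : Fin M × Fin M, s1 σ * Pstar σ = ∑ σ : Fin M × Fin M, s2 σ * Pstar σ := by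
  have payoff_gap : ∀ σ : Fin M × Fin M,
      s1 σ * Pstar σ - s2 σ * Pstar σ = 2 * (Pstar σ * (c σ.2 - c σ.1)) := by
    rintro ⟨i, j⟩
    rw [hsym, ← hc i j]
    ring
  rw [← sub_eq_zero, ← sum_sub_distrib]
  simp_rw [payoff_gap, ← mul_sum, sum_mul_sub_eq_zero_of_tft_stationary Pstar hAkin c, mul_zero]

/-- If `P*` satisfies Akin's condition for TFT and the symmetric stage game is a
potential game, then the expected payoffs of the two players under `P*` are equal. -/
theorem stmt6 {M : ℕ} (s1 s2 : Fin M × Fin M → ℝ)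
    (hsym : ∀ i j, s2 (i, j) = s1 (j, i))
    (c : Fin M → ℝ)
    (hc : ∀ i j, (s1 (i, j) - s1 (j, i)) / 2 = c j - c i)
    (Pstar : Fin M × Fin M → ℝ)
    (hpos : ∀ σ, 0 ≤ Pstar σ) (hsum : ∑ σ : Fin M × Fin M, Pstar σ = 1)
    (hAkin : ∀ σa : Fin M, ∑ σ : Fin M × Fin M,
      Pstar σ * ((if σa = σ.2 then (1 : ℝ) else 0) - (if σa = σ.1 then 1 else 0)) = 0) :
    ∑ σ : Fin M × Fin M, s1 σ * Pstar σ = ∑ σ : Fin M × Fin M, s2 σ * Pstar σ :=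
  stmt6_general s1 s2 hsym c hc Pstar hAkin
end

section
/- Akin's lemma: Let player a use a time-independent memory-one strategy T_a in an infinitely repeated game on finite state space A², and let P* be the Cesàro limit distribution P*(σ) = lim_{T→∞} (1/T) Σ_{t=1}^T P_t(σ) (assumed to exist). Then Σ_{σ'} P*(σ') [T_a(σ_a|σ') - δ_{σ_a, σ'_a}] = 0 for all σ_a ∈ A. -/
/-! Let `g t` be the probability that player 1 plays `σa` in round `t + 1`. Since player 1's
marginal in the next round is `∑ σ' T1 σa σ' P_t(σ')`, the weighted sum
`∑ σ' P_{t+1}(σ') (T1 σa σ' - δ)` equals `g (t + 1) - g t`. Its Cesàro means telescope to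
`(g T - g 0) / T`, which tends to `0` because `g` itself has convergent Cesàro means; by
linearity the same Cesàro means tend to `∑ σ' P*(σ') (T1 σa σ' - δ)`. -/

open Filter Topology Finset

noncomputable section

def cesaroMean (u : ℕ → ℝ) (T : ℕ) : ℝ :=
  (∑ t ∈ range T, u t) / T

theorem tendsto_div_natCast_of_tendsto_cesaroMean {u : ℕ → ℝ} {L : ℝ}
    (h : Tendsto (cesaroMean u) atTop (𝓝 L)) :
    Tendsto (fun T : ℕ => u T / T) atTop (𝓝 0) := by
  have hshift : Tendsto (fun T => cesaroMean u (T + 1)) atTop (𝓝 L) :=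
    h.comp (tendsto_add_atTop_nat 1)
  have hlim : Tendsto (fun T : ℕ => cesaroMean u (T + 1) - cesaroMean u T
      + cesaroMean u (T + 1) * (1 / (T : ℝ))) atTop (𝓝 0) := by
    simpa using (hshift.sub h).add (hshift.mul tendsto_one_div_atTop_nhds_zero_nat)
  refine hlim.congr' ((eventually_ne_atTop 0).mono fun T hT => ?_)
  have hT' : (T : ℝ) ≠ 0 := Nat.cast_ne_zero.mpr hT
  simp only [cesaroMean, sum_range_succ, Nat.cast_add, Nat.cast_one]
  field_simp
  ring

theorem tendsto_cesaroMean_sub_of_tendsto_cesaroMean {u : ℕ → ℝ} {L : ℝ}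
    (h : Tendsto (cesaroMean u) atTop (𝓝 L)) :
    Tendsto (cesaroMean fun t => u (t + 1) - u t) atTop (𝓝 0) := by
  have hdiff : Tendsto (fun T : ℕ => u T / T - u 0 / T) atTop (𝓝 0) := by
    simpa using (tendsto_div_natCast_of_tendsto_cesaroMean h).sub
      (tendsto_const_div_atTop_nhds_zero_nat (u 0))
  refine hdiff.congr fun T => ?_
  rw [cesaroMean, sum_range_sub u T, sub_div]

theorem tendsto_cesaroMean_sum_mul {ι : Type*} [Fintype ι] {x : ℕ → ι → ℝ} {L : ι → ℝ}
    (h : ∀ i, Tendsto (cesaroMean fun t => x t i) atTop (𝓝 (L i))) (c : ι → ℝ) :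
    Tendsto (cesaroMean fun t => ∑ i, x t i * c i) atTop (𝓝 (∑ i, L i * c i)) := by
  have hsum := tendsto_finsetSum univ fun i _ => (h i).mul_const (c i)
  refine hsum.congr fun T => ?_
  rw [cesaroMean, sum_comm, sum_div]
  exact sum_congr rfl fun i _ => by rw [cesaroMean, div_mul_eq_mul_div, sum_mul]

end

theorem stmt7_general {M : ℕ} (T1 : Fin M → Fin M × Fin M → ℝ)
    (P : ℕ → Fin M × Fin M → ℝ) (Pstar : Fin M × Fin M → ℝ)
    (hstep : ∀ t, ∀ σa : Fin M,
      (∑ σ : Fin M × Fin M, if σ.1 = σa then P (t + 1) σ else 0)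
        = ∑ σ' : Fin M × Fin M, T1 σa σ' * P t σ')
    (hconv : ∀ σ : Fin M × Fin M,
      Filter.Tendsto (fun T : ℕ => (∑ t ∈ Finset.range T, P (t + 1) σ) / T)
        Filter.atTop (nhds (Pstar σ))) :
    ∀ σa : Fin M,
      ∑ σ' : Fin M × Fin M, Pstar σ' * (T1 σa σ' - if σa = σ'.1 then 1 else 0) = 0 := by
  intro σa
  set δ : Fin M × Fin M → ℝ := fun σ' => if σa = σ'.1 then 1 else 0
  set g : ℕ → ℝ := fun t => ∑ σ', P (t + 1) σ' * δ σ'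
  have hmarginal : ∀ s, (∑ σ : Fin M × Fin M, if σ.1 = σa then P s σ else 0)
      = ∑ σ', P s σ' * δ σ' := fun s =>
    sum_congr rfl fun σ _ => by simp only [δ, mul_ite, mul_one, mul_zero, eq_comm]
  have hincrement : ∀ t, ∑ σ', P (t + 1) σ' * (T1 σa σ' - δ σ') = g (t + 1) - g t := by
    intro t
    simp only [g, mul_sub, sum_sub_distrib, ← hmarginal, hstep (t + 1) σa, mul_comm]
  have hlimit := tendsto_cesaroMean_sum_mul hconv fun σ' => T1 σa σ' - δ σ'
  have hg : Tendsto (cesaroMean g) atTop (𝓝 _) := tendsto_cesaroMean_sum_mul hconv δ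
  have hzero : Tendsto (cesaroMean fun t => ∑ σ', P (t + 1) σ' * (T1 σa σ' - δ σ'))
      atTop (𝓝 0) := by
    simpa only [hincrement] using tendsto_cesaroMean_sub_of_tendsto_cesaroMean hg
  exact tendsto_nhds_unique hlimit hzero

/-- Akin's lemma: if player 1 uses a time-independent memory-one strategy `T1` and the
Cesàro limit distribution `P*` exists, then `∑ σ' P*(σ') (T1(σa|σ') - δ_{σa,σ'₁}) = 0`. -/
theorem stmt7 {M : ℕ} (T1 : Fin M → Fin M × Fin M → ℝ)
    (P : ℕ → Fin M × Fin M → ℝ) (Pstar : Fin M × Fin M → ℝ)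
    (hprob : ∀ t σ, 0 ≤ P t σ)
    (hnorm : ∀ t, ∑ σ : Fin M × Fin M, P t σ = 1)
    (hstep : ∀ t, ∀ σa : Fin M,
      (∑ σ : Fin M × Fin M, if σ.1 = σa then P (t + 1) σ else 0)
        = ∑ σ' : Fin M × Fin M, T1 σa σ' * P t σ')
    (hconv : ∀ σ : Fin M × Fin M,
      Filter.Tendsto (fun T : ℕ => (∑ t ∈ Finset.range T, P (t + 1) σ) / T)
        Filter.atTop (nhds (Pstar σ))) :
    ∀ σa : Fin M,
      ∑ σ' : Fin M × Fin M, Pstar σ' * (T1 σa σ' - if σa = σ'.1 then 1 else 0) = 0 :=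
  stmt7_general T1 P Pstar hstep hconv
end

section
/- For any memory-one ZD strategy of player a satisfying Σ_{σ_a} c_{σ_a} T̂_a(σ_a|σ') = α_1 s_1(σ') + α_2 s_2(σ') + α_0 for all σ' ∈ A², and any distribution P* on A² satisfying Akin's condition Σ_{σ'} P*(σ') T̂_a(σ_a|σ') = 0 for all σ_a, the linear payoff relation 0 = α_1 ⟨s_1⟩* + α_2 ⟨s_2⟩* + α_0 holds, where ⟨s_b⟩* := Σ_σ s_b(σ) P*(σ). -/
/-!
Akin's condition says that `P*` is orthogonal to every Press–Dyson vector `T̂_a(σ_a | ·)`, hence to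
the combination `∑ c_{σ_a} T̂_a(σ_a | ·)`, which the ZD condition identifies with the affine payoff
combination `α₁ s₁ + α₂ s₂ + α₀`. Pairing that with the probability vector `P*` gives
`α₁ ⟨s₁⟩* + α₂ ⟨s₂⟩* + α₀`.
-/

open Finset

theorem sum_mul_sum_eq_zero_of_forall_sum_mul_eq_zero {ι κ R : Type*} [Fintype ι] [Fintype κ]
    [CommSemiring R] (p : κ → R) (T : ι → κ → R) (c : ι → R)
    (h : ∀ i, ∑ k, p k * T i k = 0) :
    ∑ k, p k * ∑ i, c i * T i k = 0 := by
  calc ∑ k, p k * ∑ i, c i * T i k = ∑ i, c i * ∑ k, p k * T i k := by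
        simp only [mul_sum]
        rw [sum_comm]
        exact sum_congr rfl fun _ _ => sum_congr rfl fun _ _ => by ring
    _ = 0 := by simp [h]

theorem sum_mul_affine_eq_of_sum_eq_one {κ : Type*} [Fintype κ] (p f g : κ → ℝ) (a b d : ℝ)
    (hp : ∑ k, p k = 1) :
    ∑ k, p k * (a * f k + b * g k + d) = a * ∑ k, f k * p k + b * ∑ k, g k * p k + d := by
  simp only [mul_add, sum_add_distrib, ← sum_mul, hp, one_mul, mul_sum]
  congr 2 <;> exact sum_congr rfl fun _ _ => by ring

theorem stmt8_general {M : ℕ} (s1 s2 : Fin M × Fin M → ℝ)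
    (That : Fin M → Fin M × Fin M → ℝ) (c : Fin M → ℝ) (α0 α1 α2 : ℝ)
    (hZD : ∀ σ' : Fin M × Fin M,
      ∑ σa : Fin M, c σa * That σa σ' = α1 * s1 σ' + α2 * s2 σ' + α0)
    (Pstar : Fin M × Fin M → ℝ)
    (hsum : ∑ σ : Fin M × Fin M, Pstar σ = 1)
    (hAkin : ∀ σa : Fin M, ∑ σ' : Fin M × Fin M, Pstar σ' * That σa σ' = 0) :
    0 = α1 * (∑ σ : Fin M × Fin M, s1 σ * Pstar σ)
      + α2 * (∑ σ : Fin M × Fin M, s2 σ * Pstar σ) + α0 := by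
  have horth := sum_mul_sum_eq_zero_of_forall_sum_mul_eq_zero Pstar That c hAkin
  simp only [hZD] at horth
  rw [← sum_mul_affine_eq_of_sum_eq_one Pstar s1 s2 α1 α2 α0 hsum, horth]

/-- A ZD strategy together with Akin's condition enforces the linear payoff relation
`0 = α1 ⟨s1⟩* + α2 ⟨s2⟩* + α0`. -/
theorem stmt8 {M : ℕ} (s1 s2 : Fin M × Fin M → ℝ)
    (That : Fin M → Fin M × Fin M → ℝ) (c : Fin M → ℝ) (α0 α1 α2 : ℝ)
    (hZD : ∀ σ' : Fin M × Fin M,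
      ∑ σa : Fin M, c σa * That σa σ' = α1 * s1 σ' + α2 * s2 σ' + α0)
    (Pstar : Fin M × Fin M → ℝ)
    (hpos : ∀ σ, 0 ≤ Pstar σ) (hsum : ∑ σ : Fin M × Fin M, Pstar σ = 1)
    (hAkin : ∀ σa : Fin M, ∑ σ' : Fin M × Fin M, Pstar σ' * That σa σ' = 0) :
    0 = α1 * (∑ σ : Fin M × Fin M, s1 σ * Pstar σ)
      + α2 * (∑ σ : Fin M × Fin M, s2 σ * Pstar σ) + α0 :=
  stmt8_general s1 s2 That c α0 α1 α2 hZD Pstar hsum hAkin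
end

section
/- In a two-player symmetric game on finite action set A = {1,...,M} where player 1 plays TFT, suppose for every memory-one strategy T_2 of player 2 there exist coefficients c_{(i,j)} (not all zero) with Σ_{(i,j)≠(M,M)} c_{(i,j)} [δ_{i,j'} T_2(j|(i',j')) - δ_{i,i'} δ_{j,j'}] + c_{(M,M)} B(i',j') = 0 for all (i',j'), where B = α_1 s_1 + α_2 s_2 + α_0. Then c_{(i,j)} depends only on i for i ≤ M-1, c_{(M,j)} = 0 for j ≤ M-1, and consequently c(j') - c(i') + c_{(M,M)} B(i',j') = 0 for all (i',j'); i.e., TFT is a ZD strategy enforcing this linear relation. -/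
/-- If a fixed nontrivial linear combination of the rows of the TFT-induced transition
matrix minus identity, together with the payoff vector `B`, vanishes for every
memory-one strategy of player 2, then the coefficients collapse (`c (i,j)` depends only
on `i` for `i ≠ M`, `c (M,j) = 0` for `j ≠ M`) and TFT is a ZD strategy enforcing
`c(j') - c(i') + c_{(M,M)} B(i',j') = 0`. -/
theorem stmt9 {M : ℕ} (s1 s2 : Fin (M + 1) × Fin (M + 1) → ℝ) (α0 α1 α2 : ℝ)
    (B : Fin (M + 1) × Fin (M + 1) → ℝ)
    (hB : ∀ σ, B σ = α1 * s1 σ + α2 * s2 σ + α0)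
    (c : Fin (M + 1) × Fin (M + 1) → ℝ) (hc : c ≠ 0)
    (h : ∀ T2 : Fin (M + 1) → Fin (M + 1) × Fin (M + 1) → ℝ,
      (∀ j σ', 0 ≤ T2 j σ') → (∀ σ', ∑ j : Fin (M + 1), T2 j σ' = 1) →
      ∀ i' j' : Fin (M + 1),
        (∑ σ ∈ Finset.univ.filter
            (fun σ : Fin (M + 1) × Fin (M + 1) => σ ≠ (Fin.last M, Fin.last M)),
          c σ * ((if σ.1 = j' then T2 σ.2 (i', j') else 0)
            - (if σ.1 = i' ∧ σ.2 = j' then 1 else 0)))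
          + c (Fin.last M, Fin.last M) * B (i', j') = 0) :
    (∀ i j j' : Fin (M + 1), i ≠ Fin.last M → c (i, j) = c (i, j')) ∧
    (∀ j : Fin (M + 1), j ≠ Fin.last M → c (Fin.last M, j) = 0) ∧
    (∀ i' j' : Fin (M + 1),
      (if j' = Fin.last M then 0 else c (j', 0)) - (if i' = Fin.last M then 0 else c (i', 0))
        + c (Fin.last M, Fin.last M) * B (i', j') = 0) := by
  have hpair1 : ∀ {a b x y : Fin (M + 1)}, a ≠ x → (a, b) ≠ (x, y) :=
    fun hax he => hax (congrArg Prod.fst he)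
  have hpair2 : ∀ {a b x y : Fin (M + 1)}, b ≠ y → (a, b) ≠ (x, y) :=
    fun hby he => hby (congrArg Prod.snd he)
  have key : ∀ j0 i' j' : Fin (M + 1),
      (if (j', j0) = (Fin.last M, Fin.last M) then 0 else c (j', j0))
      - (if (i', j') = (Fin.last M, Fin.last M) then 0 else c (i', j'))
      + c (Fin.last M, Fin.last M) * B (i', j') = 0 := by
    intro j0 i' j'
    have h1 := h (fun j _ => if j = j0 then (1:ℝ) else 0)
      (fun j σ' => by split <;> norm_num)
      (fun σ' => by simp) i' j'
    have e : (∑ σ ∈ Finset.univ.filter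
          (fun σ : Fin (M + 1) × Fin (M + 1) => σ ≠ (Fin.last M, Fin.last M)),
        c σ * ((if σ.1 = j' then (if σ.2 = j0 then (1:ℝ) else 0) else 0)
          - (if σ.1 = i' ∧ σ.2 = j' then 1 else 0)))
      = (if (j', j0) = (Fin.last M, Fin.last M) then 0 else c (j', j0))
        - (if (i', j') = (Fin.last M, Fin.last M) then 0 else c (i', j')) := by
      rw [Finset.sum_congr rfl
        (g := fun σ : Fin (M + 1) × Fin (M + 1) =>
          (if σ = (j', j0) then c σ else 0) - (if σ = (i', j') then c σ else 0))
        (fun σ _ => by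
          simp only [mul_sub, mul_ite, mul_one, mul_zero, ← ite_and, ← Prod.mk.injEq])]
      rw [Finset.sum_sub_distrib, Finset.sum_ite_eq', Finset.sum_ite_eq']
      simp only [Finset.mem_filter, Finset.mem_univ, true_and, ite_not]
    rw [e] at h1
    exact h1
  have part1 : ∀ i j j' : Fin (M + 1), i ≠ Fin.last M → c (i, j) = c (i, j') := by
    intro i j j' hi
    have k1 := key j 0 i
    have k2 := key j' 0 i
    rw [if_neg (hpair1 hi)] at k1
    rw [if_neg (hpair1 hi)] at k2
    linarith
  have part2 : ∀ j : Fin (M + 1), j ≠ Fin.last M → c (Fin.last M, j) = 0 := by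
    intro j hj
    have k1 := key j 0 (Fin.last M)
    have k2 := key (Fin.last M) 0 (Fin.last M)
    rw [if_neg (hpair2 hj)] at k1
    rw [if_pos rfl] at k2
    linarith
  refine ⟨part1, part2, fun i' j' => ?_⟩
  have k := key 0 i' j'
  by_cases hj : j' = Fin.last M
  · subst hj
    rw [if_pos rfl]
    by_cases hM0 : (0 : Fin (M + 1)) = Fin.last M
    · rw [if_pos (by rw [hM0])] at k
      have hM : M = 0 := by
        have := congrArg Fin.val hM0
        simpa using this.symm
      have hi' : i' = Fin.last M := by
        apply Fin.ext
        have := i'.isLt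
        rw [Fin.val_last]
        omega
      rw [hi', if_pos rfl]
      rw [hi', if_pos rfl] at k
      linarith
    · rw [if_neg (hpair2 hM0)] at k
      have h0 : c (Fin.last M, 0) = 0 := part2 0 hM0
      by_cases hi : i' = Fin.last M
      · subst hi
        rw [if_pos rfl] at k ⊢
        linarith
      · rw [if_neg (hpair1 hi)] at k
        rw [if_neg hi]
        have := part1 i' (Fin.last M) 0 hi
        linarith
  · rw [if_neg hj]
    rw [if_neg (hpair1 hj)] at k
    by_cases hi : i' = Fin.last M
    · subst hi
      rw [if_neg (hpair2 hj)] at k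
      rw [if_pos rfl]
      have := part2 j' hj
      linarith
    · rw [if_neg (hpair1 hi)] at k
      rw [if_neg hi]
      have := part1 i' j' 0 hi
      linarith
end

section
/- Let G be a two-player symmetric potential game with finite action set A, and let c : A → ℝ satisfy (s_1(i,j)-s_1(j,i))/2 = c(j)-c(i). Define the imitate-if-better strategy of player a by T_a(σ_a|(σ'_a, σ'_{-a})) = δ_{σ_a, σ'_{-a}} if s_{-a}(σ') > s_a(σ') and δ_{σ_a, σ'_a} otherwise. Then its Press-Dyson vectors satisfy Σ_{σ_a} c(σ_a) T̂_a(σ_a|σ') = (1/2)[s_a(σ') - s_{-a}(σ')] · 1[s_{-a}(σ') > s_a(σ')] for all σ' ∈ A². -/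
open Finset

theorem sum_mul_ite_eq_sub_ite_eq {ι R : Type*} [Fintype ι] [DecidableEq ι] [CommRing R]
    (c : ι → R) (i j : ι) :
    ∑ σ, c σ * ((if σ = j then 1 else 0) - if σ = i then 1 else 0) = c j - c i := by
  simp only [mul_sub, mul_ite, mul_one, mul_zero, sum_sub_distrib, sum_ite_eq', mem_univ,
    if_true]

/-- In a symmetric potential game, the Press-Dyson vectors of the imitate-if-better
strategy of player 1 satisfy
`∑ σ c σ T̂₁(σ|σ') = (1/2)(s1(σ') - s2(σ')) · 1[s2(σ') > s1(σ')]`. -/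
theorem stmt17 {M : ℕ} (s1 s2 : Fin M × Fin M → ℝ)
    (hsym : ∀ i j, s2 (i, j) = s1 (j, i))
    (c : Fin M → ℝ)
    (hc : ∀ i j, (s1 (i, j) - s1 (j, i)) / 2 = c j - c i)
    (T1 : Fin M → Fin M × Fin M → ℝ)
    (hT1 : ∀ σ σ', T1 σ σ' =
      if s2 σ' > s1 σ' then (if σ = σ'.2 then 1 else 0) else (if σ = σ'.1 then 1 else 0)) :
    ∀ σ' : Fin M × Fin M,
      (∑ σ : Fin M, c σ * (T1 σ σ' - if σ = σ'.1 then 1 else 0))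
        = (1 / 2) * (s1 σ' - s2 σ') * (if s2 σ' > s1 σ' then 1 else 0) := by
  rintro ⟨i, j⟩
  simp only [hT1]
  split_ifs
  · rw [sum_mul_ite_eq_sub_ite_eq, hsym, ← hc]
    ring
  · simp
end

section
/- Let P* be a probability distribution on A² (A finite) satisfying Akin's condition for the imitate-if-better strategy of player a in a two-player symmetric potential game: Σ_{σ'} P*(σ') T̂_a(σ_a|σ') = 0 for all σ_a. Then ⟨(s_a - s_{-a}) · 1[s_{-a} > s_a]⟩* = 0; equivalently, P* assigns zero probability to the set of states σ' with s_{-a}(σ') > s_a(σ'). -/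
/-!
Pair Akin's condition with the potential `c`: summing it against `c` says that the expected
potential of the imitated strategy equals that of the current one. Imitating moves player 1
from `σ.1` to `σ.2` exactly when `s2 σ > s1 σ`, and by symmetry the potential difference there
is `c σ.2 - c σ.1 = (s1 σ - s2 σ) / 2 < 0`. So `⟨(s1 - s2) · 1[s2 > s1]⟩*` vanishes, and as a
vanishing sum of nonpositive terms, each of them vanishes.
-/

open Finset

section Akin

variable {A S : Type*} [Fintype A] [Fintype S] [DecidableEq A]

theorem sum_mul_sum_kernel_sub_eq_zero_of_akin (P : S → ℝ) (T : A → S → ℝ) (π : S → A)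
    (hAkin : ∀ a, ∑ σ, P σ * (T a σ - if a = π σ then 1 else 0) = 0) (f : A → ℝ) :
    ∑ σ, P σ * (∑ a, f a * T a σ - f (π σ)) = 0 :=
  calc ∑ σ, P σ * (∑ a, f a * T a σ - f (π σ))
      = ∑ σ, ∑ a, f a * (P σ * (T a σ - if a = π σ then 1 else 0)) := by
        refine sum_congr rfl fun σ _ => ?_
        simp only [mul_sub, sum_sub_distrib, mul_ite, mul_one, mul_zero, sum_ite_eq', mem_univ,
          if_true, mul_sum]
        ring_nf
    _ = ∑ a, f a * ∑ σ, P σ * (T a σ - if a = π σ then 1 else 0) := by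
        rw [sum_comm]; simp only [mul_sum]
    _ = 0 := by simp [hAkin]

theorem sum_mul_ite_ite_indicator (f : A → ℝ) (b : Prop) [Decidable b] (y x : A) :
    ∑ a, f a * (if b then (if a = y then 1 else 0) else (if a = x then 1 else 0)) =
      if b then f y else f x := by
  split_ifs <;> simp

end Akin

theorem eq_zero_of_sum_sub_mul_indicator_mul_eq_zero {S : Type*} [Fintype S]
    (u v P : S → ℝ) (hP : ∀ σ, 0 ≤ P σ)
    (h : ∑ σ, ((u σ - v σ) * (if v σ > u σ then 1 else 0)) * P σ = 0)
    (σ : S) (hσ : v σ > u σ) : P σ = 0 := by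
  have hnonpos : ∀ τ ∈ (univ : Finset S),
      ((u τ - v τ) * (if v τ > u τ then 1 else 0)) * P τ ≤ 0 := by
    intro τ _
    split_ifs with hτ
    · exact mul_nonpos_of_nonpos_of_nonneg (by linarith) (hP τ)
    · simp
  have hterm := (sum_eq_zero_iff_of_nonpos hnonpos).mp h σ (mem_univ σ)
  simp only [hσ, if_true, mul_one, mul_eq_zero] at hterm
  exact hterm.resolve_left (by linarith)

theorem stmt18_general {M : ℕ} (s1 s2 : Fin M × Fin M → ℝ)
    (hsym : ∀ i j, s2 (i, j) = s1 (j, i))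
    (c : Fin M → ℝ)
    (hc : ∀ i j, (s1 (i, j) - s1 (j, i)) / 2 = c j - c i)
    (T1 : Fin M → Fin M × Fin M → ℝ)
    (hT1 : ∀ σ σ', T1 σ σ' =
      if s2 σ' > s1 σ' then (if σ = σ'.2 then 1 else 0) else (if σ = σ'.1 then 1 else 0))
    (Pstar : Fin M × Fin M → ℝ)
    (hpos : ∀ σ, 0 ≤ Pstar σ)
    (hAkin : ∀ σa : Fin M, ∑ σ' : Fin M × Fin M,
      Pstar σ' * (T1 σa σ' - if σa = σ'.1 then 1 else 0) = 0) :
    (∑ σ : Fin M × Fin M,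
      ((s1 σ - s2 σ) * (if s2 σ > s1 σ then 1 else 0)) * Pstar σ = 0) ∧
    (∀ σ : Fin M × Fin M, s2 σ > s1 σ → Pstar σ = 0) := by
  have hpotential : ∀ σ : Fin M × Fin M, c σ.2 - c σ.1 = (s1 σ - s2 σ) / 2 := by
    rintro ⟨i, j⟩
    rw [← hc, hsym]
  have hbalance := sum_mul_sum_kernel_sub_eq_zero_of_akin Pstar T1 Prod.fst hAkin c
  simp only [hT1, sum_mul_ite_ite_indicator] at hbalance
  have hmean : ∑ σ : Fin M × Fin M,
      ((s1 σ - s2 σ) * (if s2 σ > s1 σ then 1 else 0)) * Pstar σ = 0 := by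
    calc _ = 2 * ∑ σ, Pstar σ * ((if s2 σ > s1 σ then c σ.2 else c σ.1) - c σ.1) := by
          rw [mul_sum]
          refine sum_congr rfl fun σ _ => ?_
          split_ifs
          · rw [hpotential]; ring
          · ring
      _ = 0 := by rw [hbalance, mul_zero]
  exact ⟨hmean, eq_zero_of_sum_sub_mul_indicator_mul_eq_zero s1 s2 Pstar hpos hmean⟩

/-- If `P*` satisfies Akin's condition for the imitate-if-better strategy of player 1 in
a symmetric potential game, then `⟨(s1 - s2)·1[s2 > s1]⟩* = 0`, and `P*` assigns zero
probability to every state where `s2 > s1`. -/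
theorem stmt18 {M : ℕ} (s1 s2 : Fin M × Fin M → ℝ)
    (hsym : ∀ i j, s2 (i, j) = s1 (j, i))
    (c : Fin M → ℝ)
    (hc : ∀ i j, (s1 (i, j) - s1 (j, i)) / 2 = c j - c i)
    (T1 : Fin M → Fin M × Fin M → ℝ)
    (hT1 : ∀ σ σ', T1 σ σ' =
      if s2 σ' > s1 σ' then (if σ = σ'.2 then 1 else 0) else (if σ = σ'.1 then 1 else 0))
    (Pstar : Fin M × Fin M → ℝ)
    (hpos : ∀ σ, 0 ≤ Pstar σ) (hsum : ∑ σ : Fin M × Fin M, Pstar σ = 1)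
    (hAkin : ∀ σa : Fin M, ∑ σ' : Fin M × Fin M,
      Pstar σ' * (T1 σa σ' - if σa = σ'.1 then 1 else 0) = 0) :
    (∑ σ : Fin M × Fin M,
      ((s1 σ - s2 σ) * (if s2 σ > s1 σ then 1 else 0)) * Pstar σ = 0) ∧
    (∀ σ : Fin M × Fin M, s2 σ > s1 σ → Pstar σ = 0) :=
  stmt18_general s1 s2 hsym c hc T1 hT1 Pstar hpos hAkin
end
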